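/- Let u be a positive integer and let p be a prime divisor of u with p^c exactly dividing u (p^c | u but p^{c+1} ∤ u). Let w be a positive integer such that p does not divide w and p is self-conjugate modulo w. If X ∈ ℤ[ζ_w] satisfies X·conj(X) = u, then c is even. -/

import Mathlib

open Polynomial IsDiscreteValuationRing

/-!
Write `X = g(ζ)` with `g ∈ ℤ[T]`. Self-conjugacy gives `r` with `w ∣ p^r + 1`, so
`conj ζ = ζ^(p^r)` and `g(T) · g(T^(p^r)) - u` vanishes at `ζ`, hence is divisible by the
cyclotomic polynomial `Φ_w`. Transport this to the Witt vectors `𝕎 k` of an algebraically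
closed field `k` of characteristic `p`: at the Teichmüller lift `t` of a primitive `w`-th root
of unity of `k`, the lift `σ` of the `r`-th power of Frobenius sends `t` to `t^(p^r)`, so
`x = g(t)` satisfies `x · σ x = u`. As `𝕎 k` is a discrete valuation ring whose uniformizer `p`
is fixed by `σ`, the valuation `c` of `u` is twice that of `x`.
-/

/-- A prime `p` is self-conjugate modulo `w`: writing `w = p^s · u'` with `gcd(u',p) = 1`,
there exists `r` with `p^r ≡ -1 (mod u')`. -/
def SelfConjPrime (p w : ℕ) : Prop :=
  ∃ r : ℕ, (p : ZMod (w / p ^ w.factorization p)) ^ r = -1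

lemma SelfConjPrime.exists_dvd_pow_add_one {p w : ℕ} (hpw : ¬ p ∣ w) (h : SelfConjPrime p w) :
    ∃ r, w ∣ p ^ r + 1 := by
  obtain ⟨r, hr⟩ := h
  rw [Nat.factorization_eq_zero_of_not_dvd hpw, pow_zero, Nat.div_one] at hr
  refine ⟨r, (ZMod.natCast_eq_zero_iff _ _).mp ?_⟩
  push_cast [hr]
  ring

lemma IsPrimitiveRoot.conj_eq_pow {ζ : ℂ} {w n : ℕ} (hζ : IsPrimitiveRoot ζ w)
    (hn : w ∣ n + 1) : starRingEnd ℂ ζ = ζ ^ n := by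
  have hw : w ≠ 0 := by rintro rfl; simp at hn
  refine mul_right_cancel₀ (hζ.ne_zero hw) ?_
  rw [Complex.conj_mul', hζ.norm'_eq_one hw, Complex.ofReal_one, one_pow, ← pow_succ, eq_comm,
    hζ.pow_eq_one_iff_dvd]
  exact hn

lemma IsPrimitiveRoot.exists_aeval_mul_comp_sub_eq_zero {ζ x : ℂ} {w n : ℕ}
    (hζ : IsPrimitiveRoot ζ w) (hn : w ∣ n + 1) (hx : x ∈ Algebra.adjoin ℤ ({ζ} : Set ℂ))
    {a : ℤ} (hxx : x * starRingEnd ℂ x = a) :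
    ∃ g : ℤ[X], aeval ζ (g * g.comp (X ^ n) - C a) = 0 := by
  obtain ⟨g, rfl⟩ : ∃ g : ℤ[X], aeval ζ g = x := by
    rwa [Algebra.adjoin_singleton_eq_range_aeval] at hx
  have hconj : aeval (starRingEnd ℂ ζ) g = starRingEnd ℂ (aeval ζ g) :=
    aeval_algHom_apply (starRingEnd ℂ).toIntAlgHom ζ g
  refine ⟨g, ?_⟩
  rw [map_sub, map_mul, aeval_comp, aeval_X_pow, ← hζ.conj_eq_pow hn, hconj, hxx, aeval_C,
    algebraMap_int_eq, eq_intCast, sub_self]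

lemma Polynomial.aeval_eq_zero_of_isPrimitiveRoot {K S : Type*} [Field K] [CharZero K]
    [CommRing S] [IsDomain S] {w : ℕ} (hw : 0 < w) {ζ : K} {t : S}
    (hζ : IsPrimitiveRoot ζ w) (ht : IsPrimitiveRoot t w) {P : ℤ[X]} (hP : aeval ζ P = 0) :
    aeval t P = 0 := by
  have hdvd := minpoly.isIntegrallyClosed_dvd (hζ.isIntegral hw) hP
  rw [← cyclotomic_eq_minpoly hζ hw] at hdvd
  obtain ⟨q, rfl⟩ := hdvd
  rw [map_mul, aeval_def, eval₂_eq_eval_map, map_cyclotomic, (ht.isRoot_cyclotomic hw).eq_zero,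
    zero_mul]

lemma IsDiscreteValuationRing.addVal_map_of_map_eq {R : Type*} [CommRing R] [IsDomain R]
    [IsDiscreteValuationRing R] {σ : R →+* R} {ϖ : R} (hϖ : Irreducible ϖ) (hσ : σ ϖ = ϖ)
    (x : R) : addVal R (σ x) = addVal R x := by
  rcases eq_or_ne x 0 with rfl | hx
  · rw [map_zero]
  obtain ⟨n, v, rfl⟩ := eq_unit_mul_pow_irreducible hx hϖ
  rw [addVal_def' v hϖ n, map_mul, map_pow, hσ]
  exact addVal_def _ (v.map σ.toMonoidHom) hϖ n rfl

lemma IsDiscreteValuationRing.even_of_addVal_mul_map_eq {R : Type*} [CommRing R] [IsDomain R]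
    [IsDiscreteValuationRing R] {σ : R →+* R} {ϖ : R} (hϖ : Irreducible ϖ) (hσ : σ ϖ = ϖ)
    {x : R} {c : ℕ} (h : addVal R (x * σ x) = c) : Even c := by
  rw [addVal_mul, addVal_map_of_map_eq hϖ hσ] at h
  generalize addVal R x = v at h
  induction v using ENat.recTopCoe with
  | top => simp at h
  | coe n => exact ⟨n, by exact_mod_cast h.symm⟩

namespace WittVector

lemma isPrimitiveRoot_teichmuller (p : ℕ) [Fact p.Prime] {R : Type*} [CommRing R] {α : R} {w : ℕ}
    (hα : IsPrimitiveRoot α w) :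
    IsPrimitiveRoot (teichmuller p α) w :=
  hα.map_of_injective fun a b h => by
    simpa only [teichmuller_coeff_zero] using congrArg (coeff · 0) h

lemma addVal_natCast_prime_pow_mul {p : ℕ} [Fact p.Prime] {k : Type*} [Field k] [CharP k p]
    [PerfectRing k p] {m : ℕ} (hm : ¬ p ∣ m) (c : ℕ) :
    addVal (WittVector p k) ((p ^ c * m : ℕ) : WittVector p k) = c := by
  have hunit : IsUnit (m : WittVector p k) := by
    refine isUnit_of_coeff_zero_ne_zero _ ?_
    rw [← constantCoeff_apply, map_natCast]
    exact (CharP.cast_eq_zero_iff k p m).not.mpr hm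
  rw [Nat.cast_mul, Nat.cast_pow, mul_comm, ← hunit.unit_spec,
    addVal_def' _ (WittVector.irreducible p) c]

lemma aeval_teichmuller_mul_map_iterateFrobenius {p : ℕ} [Fact p.Prime] {k : Type*}
    [CommRing k] [IsDomain k] [CharP k p] {K : Type*} [Field K] [CharZero K] {w : ℕ} (hw : 0 < w) {ζ : K} {α : k}
    (hζ : IsPrimitiveRoot ζ w) (hα : IsPrimitiveRoot α w) {g : ℤ[X]} {a : ℤ} {r : ℕ}
    (hg : aeval ζ (g * g.comp (X ^ p ^ r) - C a) = 0) :
    aeval (teichmuller p α) g * map (iterateFrobenius k p r) (aeval (teichmuller p α) g) = a := by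
  set t := teichmuller p α
  have hσx : map (iterateFrobenius k p r) (aeval t g) = aeval (t ^ p ^ r) g := by
    have hσt : map (iterateFrobenius k p r) t = t ^ p ^ r := by
      rw [map_teichmuller, iterateFrobenius_def, map_pow]
    rw [← hσt]
    exact (aeval_algHom_apply (map (iterateFrobenius k p r)).toIntAlgHom t g).symm
  have ht := aeval_eq_zero_of_isPrimitiveRoot hw hζ (isPrimitiveRoot_teichmuller p hα) hg
  rw [map_sub, map_mul, aeval_comp, aeval_X_pow, aeval_C, sub_eq_zero] at ht
  rw [hσx, ht, algebraMap_int_eq, eq_intCast]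

end WittVector

theorem exact_exponent_even_of_selfconj_general
    (u p c w : ℕ) (hp : p.Prime)
    (hc : p ^ c ∣ u ∧ ¬ p ^ (c + 1) ∣ u)
    (hpw : ¬ p ∣ w) (hsc : SelfConjPrime p w)
    (ζ : ℂ) (hζ : IsPrimitiveRoot ζ w)
    (X : ℂ) (hX : X ∈ Algebra.adjoin ℤ ({ζ} : Set ℂ))
    (hXX : X * (starRingEnd ℂ) X = (u : ℂ)) :
    Even c := by
  have : Fact p.Prime := ⟨hp⟩
  obtain ⟨r, hr⟩ := hsc.exists_dvd_pow_add_one hpw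
  obtain ⟨g, hg⟩ := hζ.exists_aeval_mul_comp_sub_eq_zero hr hX (a := u) (by exact_mod_cast hXX)
  have : NeZero (w : ZMod p) := NeZero.of_not_dvd _ hpw
  obtain ⟨α, hα⟩ := HasEnoughRootsOfUnity.exists_primitiveRoot (AlgebraicClosure (ZMod p)) w
  have hx := WittVector.aeval_teichmuller_mul_map_iterateFrobenius
    (Nat.pos_of_dvd_of_pos hr (Nat.succ_pos _)) hζ hα hg
  obtain ⟨m, rfl⟩ := hc.1
  have hm : ¬ p ∣ m := fun h => hc.2 (pow_succ p c ▸ mul_dvd_mul_left _ h)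
  have hval := congrArg (addVal _) hx
  rw [Int.cast_natCast, WittVector.addVal_natCast_prime_pow_mul hm] at hval
  exact even_of_addVal_mul_map_eq (WittVector.irreducible p) (map_natCast _ p) hval

/-- Let `p` be a prime divisor of `u` with `p^c ∥ u`, and let `w` be a positive integer
with `p ∤ w` such that `p` is self-conjugate modulo `w`.  If `X ∈ ℤ[ζ_w]` satisfies
`X·conj(X) = u`, then `c` is even. -/
theorem exact_exponent_even_of_selfconj
    (u p c w : ℕ) (hp : p.Prime) (hu : 0 < u) (hw : 0 < w)
    (hc : p ^ c ∣ u ∧ ¬ p ^ (c + 1) ∣ u)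
    (hpw : ¬ p ∣ w) (hsc : SelfConjPrime p w)
    (ζ : ℂ) (hζ : IsPrimitiveRoot ζ w)
    (X : ℂ) (hX : X ∈ Algebra.adjoin ℤ ({ζ} : Set ℂ))
    (hXX : X * (starRingEnd ℂ) X = (u : ℂ)) :
    Even c :=
  exact_exponent_even_of_selfconj_general u p c w hp hc hpw hsc ζ hζ X hX hXX
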